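/- Let [a_1,…,a_r] and [b_1,…,b_s] be conjugate strings. Let M be the symmetric tridiagonal (r+s+1) × (r+s+1) integer matrix whose diagonal entries are, in order, −a_r, −a_{r−1}, …, −a_1, −1, −b_1, b_2, …, −b_s (i.e. the negatives of the entries of the string [a_r,…,a_1,1,b_1,…,b_s]), whose entries immediately above and below the diagonal are all 1, and whose remaining entries are 0. Then M is negative semidefinite and has a nontrivial kernel (in particular M is not negative definite). -/

import Mathlib

def hjValue : List ℤ → ℚ
  | [] => 0
  | a :: l => (a : ℚ) - 1 / hjValue l

def IsString (l : List ℤ) : Prop := l ≠ [] ∧ ∀ x ∈ l, 2 ≤ x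

def IsConjugate (a b : List ℤ) : Prop :=
  ∃ m q : ℕ, 1 ≤ q ∧ q < m ∧ Nat.Coprime m q ∧
    hjValue a = (m : ℚ) / q ∧ hjValue b = (m : ℚ) / ((m : ℚ) - q)

/-! The numerators `z_k` of the Hirzebruch–Jung continued fractions of the tails
`[l_k, …, l_n]` of the glued string `l = [a_r, …, a_1, 1, b_1, …, b_s]` obey the three-term
recurrence `z_k = l_k z_{k+1} - z_{k+2}`, which says that `x = (z_1, …, z_n)` satisfies `M x = 0`
in every row but the first, where it gives `-z_0`. Conjugacy means `[1, b_1, …, b_s] = q/m` while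
`[a_1, …, a_r] = m/q`, and a determinant-one identity for the continuant matrices turns this
into `z_0 = 0` and `z_k > 0` for `k ≥ 1`. Finally, a symmetric matrix with nonnegative
off-diagonal entries and a positive kernel vector `x` is negative semidefinite: conjugated by
`diag x` it has zero row sums, and such a matrix is minus a weighted graph Laplacian. -/

open Matrix

namespace Matrix

variable {n : Type*} [Fintype n] {A : Matrix n n ℝ}

lemma IsSymm.posSemidef_neg_of_sum_eq_zero (hA : A.IsSymm) (hoff : ∀ i j, i ≠ j → 0 ≤ A i j)
    (hrow : ∀ i, ∑ j, A i j = 0) : (-A).PosSemidef := by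
  refine PosSemidef.of_dotProduct_mulVec_nonneg (by simpa using hA.neg) fun v => ?_
  have hcol (j : n) : ∑ i, A i j = 0 := by simpa [hA.apply] using hrow j
  have hsq : ∑ i, ∑ j, A i j * (v i - v j) ^ 2 = -2 * (v ⬝ᵥ A *ᵥ v) := by
    have hexp (i j : n) : A i j * (v i - v j) ^ 2 =
        v i ^ 2 * A i j + v j ^ 2 * A i j - 2 * (v i * (A i j * v j)) := by ring
    simp only [hexp, Finset.sum_add_distrib, Finset.sum_sub_distrib, ← Finset.mul_sum, hrow,
      dotProduct, mulVec]
    rw [Finset.sum_comm (f := fun i j => v j ^ 2 * A i j)]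
    simp [← Finset.mul_sum, hcol]
  have hnonneg : 0 ≤ ∑ i, ∑ j, A i j * (v i - v j) ^ 2 := by
    refine Finset.sum_nonneg fun i _ => Finset.sum_nonneg fun j _ => ?_
    obtain rfl | hij := eq_or_ne i j
    · simp
    · exact mul_nonneg (hoff i j hij) (sq_nonneg _)
  simp only [neg_mulVec, dotProduct_neg, star_trivial]
  linarith

lemma IsSymm.posSemidef_neg_of_mulVec_eq_zero [DecidableEq n] (hA : A.IsSymm)
    (hoff : ∀ i j, i ≠ j → 0 ≤ A i j) {x : n → ℝ} (hx : ∀ i, 0 < x i) (hAx : A *ᵥ x = 0) :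
    (-A).PosSemidef := by
  set B := diagonal x * A * diagonal x
  have hB : (-B).PosSemidef := by
    refine IsSymm.posSemidef_neg_of_sum_eq_zero ?_ (fun i j hij => ?_) fun i => ?_
    · simp [B, IsSymm, transpose_mul, hA.eq, Matrix.mul_assoc]
    · simpa [B] using mul_nonneg (mul_nonneg (hx i).le (hoff i j hij)) (hx j).le
    · simpa [B, Finset.mul_sum, mulVec, dotProduct, mul_assoc] using
        congr_arg (x i * ·) (congr_fun hAx i)
  convert hB.conjTranspose_mul_mul_same (diagonal x⁻¹) using 1
  ext i j
  have := (hx i).ne'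
  have := (hx j).ne'
  simp only [neg_apply, conjTranspose_eq_transpose_of_trivial, diagonal_transpose, mul_neg,
    mul_diagonal, diagonal_mul, Pi.inv_apply, neg_mul, neg_inj, B]
  field_simp

end Matrix

def hjMatrix (c : ℤ) : Matrix (Fin 2) (Fin 2) ℤ := !![c, -1; 1, 0]

def hjProd (L : List ℤ) : Matrix (Fin 2) (Fin 2) ℤ := (L.map hjMatrix).prod

def hjNum (L : List ℤ) : ℤ := hjProd L 0 0

def hjDen (L : List ℤ) : ℤ := hjProd L 1 0

@[simp] lemma hjProd_nil : hjProd [] = 1 := rfl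

@[simp] lemma hjProd_cons (c : ℤ) (L : List ℤ) : hjProd (c :: L) = hjMatrix c * hjProd L := by
  simp [hjProd]

@[simp] lemma hjProd_append (L₁ L₂ : List ℤ) : hjProd (L₁ ++ L₂) = hjProd L₁ * hjProd L₂ := by
  simp [hjProd]

@[simp] lemma hjNum_nil : hjNum [] = 1 := rfl

@[simp] lemma hjDen_nil : hjDen [] = 0 := rfl

lemma hjNum_cons (c : ℤ) (L : List ℤ) : hjNum (c :: L) = c * hjNum L - hjDen L := by
  simp only [hjNum, hjDen, hjProd_cons, hjMatrix, mul_apply, Fin.sum_univ_two, of_apply,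
    cons_val', cons_val_zero, cons_val_one, cons_val_fin_one]
  ring

lemma hjDen_cons (c : ℤ) (L : List ℤ) : hjDen (c :: L) = hjNum L := by
  simp [hjNum, hjDen, hjMatrix, mul_apply, Fin.sum_univ_two]

lemma det_hjProd (L : List ℤ) : (hjProd L).det = 1 := by
  induction L with
  | nil => simp
  | cons c L ih =>
    rw [hjProd_cons, det_mul, ih]
    simp [hjMatrix, det_fin_two]

lemma hjProd_reverse (L : List ℤ) :
    hjProd L.reverse = diagonal ![1, -1] * (hjProd L)ᵀ * diagonal ![1, -1] := by
  set J : Matrix (Fin 2) (Fin 2) ℤ := diagonal ![1, -1]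
  have hJJ : J * J = 1 := by
    ext i j; fin_cases i <;> fin_cases j <;> simp [J]
  have hJ (c : ℤ) : J * hjMatrix c = (hjMatrix c)ᵀ * J := by
    ext i j; fin_cases i <;> fin_cases j <;> simp [J, hjMatrix]
  induction L with
  | nil => simp [hJJ]
  | cons c L ih =>
    rw [List.reverse_cons, hjProd_append, ih, hjProd_cons, hjProd_cons, hjProd_nil, mul_one,
      transpose_mul]
    simp only [Matrix.mul_assoc, hJ]

lemma hjProd_reverse_zero_zero (L : List ℤ) : hjProd L.reverse 0 0 = hjNum L := by
  simp [hjProd_reverse, hjNum, mul_apply, Fin.sum_univ_two]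

lemma hjProd_reverse_zero_one (L : List ℤ) : hjProd L.reverse 0 1 = -hjDen L := by
  simp [hjProd_reverse, hjDen, mul_apply, Fin.sum_univ_two]

section Strings

variable {L : List ℤ}

lemma hjDen_nonneg_and_lt_hjNum (hL : ∀ x ∈ L, 2 ≤ x) : 0 ≤ hjDen L ∧ hjDen L < hjNum L := by
  induction L with
  | nil => simp
  | cons c L ih =>
    obtain ⟨h0, h1⟩ := ih fun x hx => hL x (List.mem_cons_of_mem c hx)
    have hc := hL c List.mem_cons_self
    rw [hjNum_cons, hjDen_cons]
    constructor <;> nlinarith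

lemma hjNum_pos (hL : ∀ x ∈ L, 2 ≤ x) : 0 < hjNum L :=
  (hjDen_nonneg_and_lt_hjNum hL).1.trans_lt (hjDen_nonneg_and_lt_hjNum hL).2

lemma hjDen_pos (hL : ∀ x ∈ L, 2 ≤ x) (hne : L ≠ []) : 0 < hjDen L := by
  obtain ⟨c, L, rfl⟩ := List.exists_cons_of_ne_nil hne
  exact hjDen_cons c L ▸ hjNum_pos fun x hx => hL x (List.mem_cons_of_mem c hx)

-- At `L = []` this holds only because `1 / 0 = 0` in `ℚ`; the same junk value makes `[c] = c`.
lemma hjValue_eq_hjNum_div_hjDen (hL : ∀ x ∈ L, 2 ≤ x) : hjValue L = hjNum L / hjDen L := by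
  induction L with
  | nil => simp [hjValue]
  | cons c L ih =>
    have hL' : ∀ x ∈ L, 2 ≤ x := fun x hx => hL x (List.mem_cons_of_mem c hx)
    have hnum : (hjNum L : ℚ) ≠ 0 := by exact_mod_cast (hjNum_pos hL').ne'
    rw [hjValue, ih hL', hjNum_cons, hjDen_cons]
    push_cast
    field_simp

end Strings

lemma isCoprime_hjNum_hjDen (L : List ℤ) : IsCoprime (hjNum L) (hjDen L) := by
  induction L with
  | nil => exact isCoprime_one_left
  | cons c L ih =>
    rw [hjNum_cons, hjDen_cons, sub_eq_neg_add, mul_comm]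
    exact ih.symm.neg_left.add_mul_left_left c

lemma hjNum_hjDen_eq_of_hjValue_eq {L : List ℤ} (hL : ∀ x ∈ L, 2 ≤ x) (hne : L ≠ [])
    {m q : ℕ} (hq : 0 < q) (hmq : m.Coprime q) (hval : hjValue L = m / q) :
    hjNum L = m ∧ hjDen L = q := by
  refine Rat.div_int_inj (hjDen_pos hL hne) (by exact_mod_cast hq)
    (Int.isCoprime_iff_gcd_eq_one.mp (isCoprime_hjNum_hjDen L)) hmq ?_
  rw [← hjValue_eq_hjNum_div_hjDen hL, hval]
  push_cast
  rfl

lemma hjNum_reverse_take_append {a c : List ℤ} (hnum : hjNum c = hjDen a)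
    (hden : hjDen c = hjNum a) (j : ℕ) :
    hjNum ((a.take j).reverse ++ c) = hjDen (a.drop j) := by
  set A := hjProd (a.take j)
  set B := hjProd (a.drop j)
  have hAB : hjProd a = A * B := by rw [← hjProd_append, List.take_append_drop]
  have hdet : A 0 0 * A 1 1 - A 0 1 * A 1 0 = 1 := by
    rw [← det_fin_two]; exact det_hjProd _
  have hnum_a : hjNum a = A 0 0 * B 0 0 + A 0 1 * B 1 0 := by
    simp [hjNum, hAB, mul_apply, Fin.sum_univ_two]
  have hden_a : hjDen a = A 1 0 * B 0 0 + A 1 1 * B 1 0 := by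
    simp [hjDen, hAB, mul_apply, Fin.sum_univ_two]
  -- The top row `(A₀₀, -A₁₀)` of the reversed prefix's matrix is the bottom row of `A⁻¹`.
  have hglue : hjNum ((a.take j).reverse ++ c) = A 0 0 * hjDen a - A 1 0 * hjNum a := by
    rw [← hnum, ← hden]
    simp only [hjNum, hjDen, hjProd_append, mul_apply, Fin.sum_univ_two,
      hjProd_reverse_zero_zero, hjProd_reverse_zero_one]
    ring
  rw [hglue, hnum_a, hden_a]
  show _ = B 1 0
  linear_combination B 1 0 * hdet

lemma hjNum_drop {l : List ℤ} {k : ℕ} (hk : k < l.length) :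
    hjNum (l.drop k) = l[k] * hjNum (l.drop (k + 1)) - hjDen (l.drop (k + 1)) := by
  rw [List.drop_eq_getElem_cons hk, hjNum_cons]

lemma hjDen_drop_succ (l : List ℤ) (k : ℕ) :
    hjDen (l.drop (k + 1)) = if k + 1 < l.length then hjNum (l.drop (k + 2)) else 0 := by
  split_ifs with hk
  · rw [List.drop_eq_getElem_cons hk, hjDen_cons]
  · rw [List.drop_eq_nil_of_le (by omega), hjDen_nil]

def chainMatrix (l : List ℤ) : Matrix (Fin l.length) (Fin l.length) ℝ := fun i j =>
  if i = j then -(l.get i : ℝ)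
  else if (i : ℕ) + 1 = (j : ℕ) ∨ (j : ℕ) + 1 = (i : ℕ) then 1 else 0

namespace chainMatrix
variable (l : List ℤ)

lemma isSymm : (chainMatrix l).IsSymm := by
  ext i j
  simp only [transpose_apply, chainMatrix, eq_comm, or_comm]
  split_ifs <;> simp_all

lemma nonneg_of_ne {i j : Fin l.length} (hij : i ≠ j) : 0 ≤ chainMatrix l i j := by
  simp only [chainMatrix, if_neg hij]
  split_ifs <;> norm_num

-- Vectors are read off functions on `ℕ`, so that the neighbours `k ± 1` need no `Fin` arithmetic.
lemma mulVec_apply (x : ℕ → ℝ) (k : Fin l.length) :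
    (chainMatrix l *ᵥ fun j => x j) k =
      (if 0 < (k : ℕ) then x (k - 1) else 0) - l.get k * x k +
        (if (k : ℕ) + 1 < l.length then x (k + 1) else 0) := by
  have hterm (j : Fin l.length) : chainMatrix l k j * x j =
      (if (j : ℕ) + 1 = k then x j else 0) + (if j = k then -l.get k * x k else 0) +
        (if (j : ℕ) = k + 1 then x j else 0) := by
    obtain rfl | hjk := eq_or_ne j k
    · simp [chainMatrix]
    · have hjk' : (j : ℕ) ≠ k := Fin.val_ne_of_ne hjk
      simp only [chainMatrix, if_neg hjk.symm, if_neg hjk]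
      split_ifs <;> first | (exfalso; omega) | ring
  have hprev : (∑ j ∈ Finset.range l.length, if j + 1 = (k : ℕ) then x j else 0) =
      if 0 < (k : ℕ) then x (k - 1) else 0 := by
    rcases k with ⟨_ | k, hk⟩
    · simp
    · simp only [Nat.add_right_cancel_iff, Finset.sum_ite_eq', Finset.mem_range]
      simp [show k < l.length by omega]
  simp only [mulVec, dotProduct, hterm, Finset.sum_add_distrib, Finset.sum_ite_eq',
    Finset.mem_univ, if_true,
    Fin.sum_univ_eq_sum_range (fun j => if j + 1 = (k : ℕ) then x j else 0),
    Fin.sum_univ_eq_sum_range (fun j => if j = (k : ℕ) + 1 then x j else 0),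
    Finset.mem_range, hprev]
  ring

lemma mulVec_hjNum_drop (k : Fin l.length) :
    (chainMatrix l *ᵥ fun j => (hjNum (l.drop (j + 1)) : ℝ)) k =
      if (k : ℕ) = 0 then -(hjNum l : ℝ) else 0 := by
  have hrec := hjNum_drop k.isLt
  rw [hjDen_drop_succ] at hrec
  rw [mulVec_apply l fun j => (hjNum (l.drop (j + 1)) : ℝ)]
  rcases k with ⟨_ | k, hk⟩
  · simp only [List.drop_zero] at hrec
    simp [hrec, neg_add_eq_sub]
  · simp [hrec]

end chainMatrix

lemma IsConjugate.hjNum_hjDen_one_cons {a b : List ℤ} (ha : IsString a) (hb : IsString b)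
    (hconj : IsConjugate a b) : hjNum (1 :: b) = hjDen a ∧ hjDen (1 :: b) = hjNum a := by
  obtain ⟨m, q, hq, hqm, hmq, hva, hvb⟩ := hconj
  obtain ⟨hnum_a, hden_a⟩ := hjNum_hjDen_eq_of_hjValue_eq ha.2 ha.1 hq hmq hva
  obtain ⟨hnum_b, hden_b⟩ := hjNum_hjDen_eq_of_hjValue_eq hb.2 hb.1 (Nat.sub_pos_of_lt hqm)
    ((Nat.coprime_self_sub_right hqm.le).mpr hmq) (by rw [hvb, Nat.cast_sub hqm.le])
  rw [hjNum_cons, hjDen_cons, hnum_a, hden_a, hnum_b, hden_b, Nat.cast_sub hqm.le]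
  constructor <;> ring

section Glue

variable {a b : List ℤ}

lemma hjNum_reverse_append_eq_zero (hnum : hjNum (1 :: b) = hjDen a)
    (hden : hjDen (1 :: b) = hjNum a) : hjNum (a.reverse ++ 1 :: b) = 0 := by
  simpa using hjNum_reverse_take_append hnum hden a.length

lemma hjNum_drop_reverse_append_pos (hnum : hjNum (1 :: b) = hjDen a)
    (hden : hjDen (1 :: b) = hjNum a) (ha : ∀ x ∈ a, 2 ≤ x) (hb : ∀ x ∈ b, 2 ≤ x) {k : ℕ}
    (hk : 0 < k) : 0 < hjNum ((a.reverse ++ 1 :: b).drop k) := by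
  by_cases hka : k ≤ a.length
  · rw [List.drop_append_of_le_length (by simpa using hka), List.drop_reverse,
      hjNum_reverse_take_append hnum hden]
    refine hjDen_pos (fun x hx => ha x (List.mem_of_mem_drop hx)) ?_
    simp only [ne_eq, List.drop_eq_nil_iff]
    omega
  · rw [List.drop_append, List.drop_eq_nil_of_le (by rw [List.length_reverse]; omega),
      List.nil_append, List.length_reverse, show k - a.length = (k - a.length - 1) + 1 by omega,
      List.drop_succ_cons]
    exact hjNum_pos fun x hx => hb x (List.mem_of_mem_drop hx)

end Glue

/-- Let `[a₁,…,a_r]` and `[b₁,…,b_s]` be conjugate strings and let `M` be the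
symmetric tridiagonal matrix whose diagonal entries are the negatives of the
entries of `[a_r,…,a₁, 1, b₁,…,b_s]`, whose entries immediately above and
below the diagonal are `1`, and whose remaining entries are `0`. Then `M` is
negative semidefinite with nontrivial kernel (in particular, it is not
negative definite). -/
theorem conjugate_glue_matrix_negSemidef_kernel (a b : List ℤ)
    (ha : IsString a) (hb : IsString b) (hconj : IsConjugate a b) :
    let l : List ℤ := a.reverse ++ 1 :: b
    let M : Matrix (Fin l.length) (Fin l.length) ℝ := fun i j =>
      if i = j then -(l.get i : ℝ)
      else if (i : ℕ) + 1 = (j : ℕ) ∨ (j : ℕ) + 1 = (i : ℕ) then 1 else 0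
    (-M).PosSemidef ∧ ∃ x : Fin l.length → ℝ, x ≠ 0 ∧ M.mulVec x = 0 := by
  intro l M
  obtain ⟨hnum, hden⟩ := hconj.hjNum_hjDen_one_cons ha hb
  set x : Fin l.length → ℝ := fun k => hjNum (l.drop (k + 1))
  have hx (k : Fin l.length) : 0 < x k := by
    simpa [x] using hjNum_drop_reverse_append_pos hnum hden ha.2 hb.2 k.val.succ_pos
  have hMx : M *ᵥ x = 0 := by
    ext k
    change (chainMatrix l *ᵥ fun j => (hjNum (l.drop (j + 1)) : ℝ)) k = 0
    rw [chainMatrix.mulVec_hjNum_drop, hjNum_reverse_append_eq_zero hnum hden]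
    simp
  have hx₀ : x ≠ 0 := fun h => (hx ⟨0, by simp [l]⟩).ne' (congr_fun h _)
  exact ⟨IsSymm.posSemidef_neg_of_mulVec_eq_zero (chainMatrix.isSymm l)
    (fun _ _ => chainMatrix.nonneg_of_ne l) hx hMx, x, hx₀, hMx⟩
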